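/- Let G be a finite simple connected nontrivial graph. The LCM lattice of the edge ideal I(G) is a Boolean lattice if and only if G is a star graph. -/

import Mathlib

/-- A finset of vertices is a union of edges of `G` if every vertex in it has a
neighbor in it. -/
def IsUnionOfEdges {V : Type*} (G : SimpleGraph V) (S : Finset V) : Prop :=
  ∀ v ∈ S, ∃ w ∈ S, G.Adj v w

/-- The LCM lattice of the edge ideal `I(G)`, ordered by inclusion. -/
abbrev EdgeLcmLattice {V : Type*} (G : SimpleGraph V) : Type _ :=
  {S : Finset V // IsUnionOfEdges G S}

/-- The star graph on `n` vertices: vertex `0` is joined to all other vertices. -/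
def starGraph (n : ℕ) : SimpleGraph (Fin n) :=
  SimpleGraph.fromRel fun a _ => (a : ℕ) = 0

/-!
Subsets of vertices that are unions of edges, ordered by inclusion, model the LCM lattice; the
join is the union. If `G` is a star with center `c`, a union of edges is determined by the set of
leaves it contains, and every set of leaves arises, so the lattice is Boolean. Conversely, a
Boolean lattice is distributive. Along a walk `a b c d` with `a ≠ c` and `b ≠ d`, the edge `bc`
lies below the join of `ab` and `cd`, yet it shares at most one vertex with each, and no nonempty
union of edges fits in a single vertex; distributivity would force `bc = ⊥`. So every walk of
length three backtracks, and a connected graph with this property is a star.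
-/

theorem OrderIso.disjoint_map {P L : Type*} [PartialOrder P] [OrderBot P] [PartialOrder L]
    [OrderBot L] (φ : P ≃o L) {a b : P} (h : Disjoint a b) : Disjoint (φ a) (φ b) := by
  intro x hxa hxb
  rw [← φ.map_bot, ← φ.symm_apply_le]
  exact h (φ.symm_apply_le.2 hxa) (φ.symm_apply_le.2 hxb)

theorem OrderIso.eq_bot_of_le_sup_of_disjoint {P L : Type*} [SemilatticeSup P] [OrderBot P]
    [DistribLattice L] [OrderBot L] (φ : P ≃o L) {a b c : P} (h : a ≤ b ⊔ c)
    (hb : Disjoint a b) (hc : Disjoint a c) : a = ⊥ := by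
  have hle : φ a ≤ φ b ⊔ φ c := φ.map_sup b c ▸ φ.monotone h
  apply φ.injective
  rw [φ.map_bot]
  exact (φ.disjoint_map hb).eq_bot_of_le ((φ.disjoint_map hc).left_le_of_le_sup_right hle)

def Equiv.finsetOrderIso {α β : Type*} (e : α ≃ β) : Finset α ≃o Finset β :=
  e.finsetCongr.toOrderIso (fun _ _ => Finset.map_subset_map.2)
    (fun _ _ => Finset.map_subset_map.2)

section IsUnionOfEdges

open SimpleGraph

variable {V : Type*} {G : SimpleGraph V}

theorem isUnionOfEdges_empty : IsUnionOfEdges G ∅ := by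
  simp [IsUnionOfEdges]

theorem isUnionOfEdges_pair [DecidableEq V] {x y : V} (h : G.Adj x y) :
    IsUnionOfEdges G {x, y} := by
  intro v hv
  rcases Finset.mem_insert.1 hv with rfl | hv
  · exact ⟨y, by simp, h⟩
  · rw [Finset.mem_singleton.1 hv]
    exact ⟨x, by simp, h.symm⟩

theorem IsUnionOfEdges.union [DecidableEq V] {S T : Finset V} (hS : IsUnionOfEdges G S)
    (hT : IsUnionOfEdges G T) : IsUnionOfEdges G (S ∪ T) := by
  intro v hv
  rcases Finset.mem_union.1 hv with hv | hv
  · obtain ⟨w, hw, hvw⟩ := hS v hv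
    exact ⟨w, Finset.mem_union_left _ hw, hvw⟩
  · obtain ⟨w, hw, hvw⟩ := hT v hv
    exact ⟨w, Finset.mem_union_right _ hw, hvw⟩

theorem isUnionOfEdges_biUnion [DecidableEq V] {ι : Type*} (s : Finset ι) {t : ι → Finset V}
    (ht : ∀ i ∈ s, IsUnionOfEdges G (t i)) : IsUnionOfEdges G (s.biUnion t) := by
  intro v hv
  obtain ⟨i, hi, hvi⟩ := Finset.mem_biUnion.1 hv
  obtain ⟨w, hw, hvw⟩ := ht i hi v hvi
  exact ⟨w, Finset.mem_biUnion.2 ⟨i, hi, hw⟩, hvw⟩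

theorem IsUnionOfEdges.center_mem_iff {c : V} {S : Finset V}
    (hS : IsUnionOfEdges (starGraph c) S) : c ∈ S ↔ ∃ x ∈ S, x ≠ c := by
  refine ⟨fun hc => ?_, fun ⟨x, hx, hxc⟩ => ?_⟩
  · obtain ⟨w, hw, hcw⟩ := hS c hc
    exact ⟨w, hw, hcw.ne.symm⟩
  · obtain ⟨w, hw, hxw⟩ := hS x hx
    rwa [← (starGraph_adj.1 hxw).2.resolve_left hxc]

end IsUnionOfEdges

namespace EdgeLcmLattice

open SimpleGraph

variable {V : Type*} {G : SimpleGraph V}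

instance [DecidableEq V] : SemilatticeSup (EdgeLcmLattice G) :=
  Subtype.semilatticeSup fun _ _ => IsUnionOfEdges.union

instance : OrderBot (EdgeLcmLattice G) :=
  Subtype.orderBot isUnionOfEdges_empty

def edge [DecidableEq V] {x y : V} (h : G.Adj x y) : EdgeLcmLattice G :=
  ⟨{x, y}, isUnionOfEdges_pair h⟩

theorem eq_bot_of_subset_singleton (S : EdgeLcmLattice G) {v : V} (h : S.1 ⊆ {v}) : S = ⊥ := by
  refine Subtype.ext (Finset.eq_empty_of_forall_notMem fun x hx => ?_)
  obtain ⟨y, hy, hxy⟩ := S.2 x hx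
  rw [Finset.mem_singleton.1 (h hx), Finset.mem_singleton.1 (h hy)] at hxy
  exact G.irrefl hxy

theorem disjoint_of_inter_subset_singleton [DecidableEq V] {S T : EdgeLcmLattice G} {v : V}
    (h : S.1 ∩ T.1 ⊆ {v}) : Disjoint S T := fun X hXS hXT =>
  (X.eq_bot_of_subset_singleton fun _ hx => h (Finset.mem_inter.2 ⟨hXS hx, hXT hx⟩)).le

theorem eq_or_eq_of_adj_of_adj_of_adj {L : Type*} [DistribLattice L] [OrderBot L]
    (φ : EdgeLcmLattice G ≃o L) {a b c d : V} (hab : G.Adj a b) (hbc : G.Adj b c)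
    (hcd : G.Adj c d) : a = c ∨ b = d := by
  classical
  by_contra! h
  have hle : edge hbc ≤ edge hab ⊔ edge hcd :=
    show ({b, c} : Finset V) ⊆ {a, b} ∪ {c, d} by grind
  have hbot : edge hbc = ⊥ := φ.eq_bot_of_le_sup_of_disjoint hle
    (disjoint_of_inter_subset_singleton (v := b) (by grind [edge, hbc.ne]))
    (disjoint_of_inter_subset_singleton (v := c) (by grind [edge, hbc.ne]))
  have hb : b ∈ (edge hbc).1 := Finset.mem_insert_self b {c}
  rw [hbot] at hb
  exact Finset.notMem_empty b hb

def starGraphOrderIso [DecidableEq V] (c : V) :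
    EdgeLcmLattice (starGraph c) ≃o Finset {x // x ≠ c} :=
  Equiv.toOrderIso
    { toFun := fun S => S.1.subtype (· ≠ c)
      invFun := fun T => ⟨T.biUnion fun x => {c, x.1}, isUnionOfEdges_biUnion T fun x _ =>
        isUnionOfEdges_pair (starGraph_adj.2 ⟨x.2.symm, Or.inl rfl⟩)⟩
      left_inv := fun S => by
        refine Subtype.ext (Finset.ext fun x => ?_)
        by_cases hx : x = c
        · subst hx
          simp [S.2.center_mem_iff, and_comm]
        · simp [hx]
      right_inv := fun T => by
        ext x
        simp [x.2] }
    (fun _ _ h => Finset.subtype_mono h)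
    (fun _ _ h => Finset.biUnion_subset_biUnion_of_subset_left _ h)

end EdgeLcmLattice

theorem starGraph_eq (n : ℕ) [NeZero n] : starGraph n = SimpleGraph.starGraph 0 := by
  ext x y
  simp only [starGraph, SimpleGraph.fromRel_adj, Fin.val_eq_zero_iff, SimpleGraph.starGraph_adj]

namespace SimpleGraph

variable {V W : Type*}

def Iso.starGraph (e : V ≃ W) (r : V) : starGraph r ≃g starGraph (e r) :=
  ⟨e, by simp [e.injective.ne_iff]⟩

theorem eq_starGraph_of_iso {G : SimpleGraph V} {r : W} (f : G ≃g starGraph r) :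
    G = starGraph (f.symm r) := by
  ext x y
  rw [← f.map_adj_iff, starGraph_adj, starGraph_adj, f.injective.ne_iff, RelIso.eq_symm_apply,
    RelIso.eq_symm_apply]

theorem eq_starGraph_of_forall_adj_adj_eq {G : SimpleGraph V} (hconn : G.Connected) {c : V}
    (hleaf : ∀ x, G.Adj c x → ∀ z, G.Adj x z → z = c) : G = starGraph c := by
  have hnear : ∀ x, x = c ∨ G.Adj c x := by
    intro x
    induction (reachable_iff_reflTransGen c x).1 (hconn c x) with
    | refl => exact Or.inl rfl
    | tail _ hyz ih =>
      rcases ih with rfl | hcy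
      · exact Or.inr hyz
      · exact Or.inl (hleaf _ hcy _ hyz)
  ext x y
  rw [starGraph_adj]
  refine ⟨fun hxy => ⟨hxy.ne, ?_⟩, ?_⟩
  · rcases hnear x with rfl | hcx
    · exact Or.inl rfl
    · exact Or.inr (hleaf x hcx y hxy)
  · rintro ⟨hne, rfl | rfl⟩
    · exact (hnear y).resolve_left hne.symm
    · exact ((hnear x).resolve_left hne).symm

/-- The center is `v` if `v` has a neighbor other than `u`, and `u` otherwise. -/
theorem exists_eq_starGraph {G : SimpleGraph V} (hconn : G.Connected) {u v : V}
    (huv : G.Adj u v)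
    (hback : ∀ ⦃a b c d⦄, G.Adj a b → G.Adj b c → G.Adj c d → a = c ∨ b = d) :
    ∃ c, G = starGraph c := by
  by_cases hw : ∃ w, G.Adj v w ∧ w ≠ u
  · obtain ⟨w, hvw, hwu⟩ := hw
    refine ⟨v, eq_starGraph_of_forall_adj_adj_eq hconn fun x hvx z hxz => ?_⟩
    by_cases hxu : x = u
    · subst hxu
      exact ((hback hvw.symm hvx hxz).resolve_left hwu).symm
    · exact ((hback huv hvx hxz).resolve_left (Ne.symm hxu)).symm
  · push Not at hw
    refine ⟨u, eq_starGraph_of_forall_adj_adj_eq hconn fun x hux z hxz => ?_⟩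
    by_cases hxv : x = v
    · subst hxv
      exact hw z hxz
    · exact ((hback huv.symm hux hxz).resolve_left (Ne.symm hxv)).symm

end SimpleGraph

/-- The LCM lattice of the edge ideal of a connected nontrivial graph `G` is Boolean
(order-isomorphic to the lattice of subsets of a finite set) iff `G` is a star graph. -/
theorem boolean_edge_lcm_lattice_iff_star {V : Type*} [Fintype V]
    (G : SimpleGraph V) (hconn : G.Connected) (hnt : ∃ a b : V, G.Adj a b) :
    (∃ k : ℕ, Nonempty (EdgeLcmLattice G ≃o Finset (Fin k))) ↔
      ∃ n : ℕ, 2 ≤ n ∧ Nonempty (G ≃g starGraph n) := by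
  classical
  obtain ⟨u, v, huv⟩ := hnt
  constructor
  · rintro ⟨k, ⟨φ⟩⟩
    obtain ⟨c, rfl⟩ := SimpleGraph.exists_eq_starGraph hconn huv
      fun _ _ _ _ => EdgeLcmLattice.eq_or_eq_of_adj_of_adj_of_adj φ
    have : Nontrivial V := ⟨⟨u, v, huv.ne⟩⟩
    have hcard : 2 ≤ Fintype.card V := Fintype.one_lt_card
    have : NeZero (Fintype.card V) := ⟨by omega⟩
    let e := (Fintype.equivFin V).trans (Equiv.swap (Fintype.equivFin V c) 0)
    have hec : e c = 0 := by simp [e]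
    refine ⟨_, hcard, ⟨?_⟩⟩
    rw [starGraph_eq, ← hec]
    exact SimpleGraph.Iso.starGraph e c
  · rintro ⟨n, hn, ⟨f⟩⟩
    have : NeZero n := ⟨by omega⟩
    rw [starGraph_eq] at f
    rw [SimpleGraph.eq_starGraph_of_iso f]
    exact ⟨_, ⟨(EdgeLcmLattice.starGraphOrderIso _).trans (Fintype.equivFin _).finsetOrderIso⟩⟩
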